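/- arXiv:1007.0070 — 6 statements merged into one kernel-verified Lean document; each statement's English description precedes it below -/
import Mathlib

section
/- At the parameters (a,b) = (2,0): the admissible pruning front P̂_{2,0} equals the set {ε ∈ Σ : (ε₀, ε₁, ε₂, ε₃, …) = (+1, -1, -1, -1, …)}, i.e. the set of all bi-infinite sequences whose head is (+1,-1,-1,-1,…), and the primary pruned region D_{2,0} is empty. -/
open Filter

/-- Depth-`k` truncation of the continued fraction
`r_n(ε)(a,b) = 1/(aε_n + b/(aε_{n+1} + b/(aε_{n+2} + ⋯)))`. -/
noncomputable def rTrunc (a b : ℝ) (ε : ℤ → ℝ) : ℕ → ℤ → ℝ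
  | 0, n => 1 / (a * ε n)
  | k + 1, n => 1 / (a * ε n + b * rTrunc a b ε k (n + 1))

/-- The continued fraction `r_n(ε)(a,b)`, as the limit of its finite truncations. -/
noncomputable def rCF (a b : ℝ) (ε : ℤ → ℝ) (n : ℤ) : ℝ :=
  limUnder atTop (fun k => rTrunc a b ε k n)

/-- Depth-`k` truncation of the continued fraction
`s_n(ε)(a,b) = 1/(-aε_n + b/(-aε_{n-1} + b/(-aε_{n-2} + ⋯)))`. -/
noncomputable def sTrunc (a b : ℝ) (ε : ℤ → ℝ) : ℕ → ℤ → ℝ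
  | 0, n => 1 / (-(a * ε n))
  | k + 1, n => 1 / (-(a * ε n) + b * sTrunc a b ε k (n - 1))

/-- The continued fraction `s_n(ε)(a,b)`, as the limit of its finite truncations. -/
noncomputable def sCF (a b : ℝ) (ε : ℤ → ℝ) (n : ℤ) : ℝ :=
  limUnder atTop (fun k => sTrunc a b ε k n)

/-- `p(ε)(a,b) = 1 - b s₋₂ + b² s₋₂s₋₃ - b³ s₋₂s₋₃s₋₄ + ⋯`. -/
noncomputable def pFun (a b : ℝ) (ε : ℤ → ℝ) : ℝ :=
  ∑' k : ℕ, (-b) ^ k * ∏ j ∈ Finset.range k, sCF a b ε (-2 - (j : ℤ))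

/-- `q(ε)(a,b) = r₀ - r₀r₁ + r₀r₁r₂ - ⋯`. -/
noncomputable def qFun (a b : ℝ) (ε : ℤ → ℝ) : ℝ :=
  ∑' n : ℕ, (-1 : ℝ) ^ n * ∏ j ∈ Finset.range (n + 1), rCF a b ε (j : ℤ)

lemma rTrunc_eq (ε : ℤ → ℝ) (k : ℕ) (n : ℤ) : rTrunc 2 0 ε k n = 1 / (2 * ε n) := by
  cases k <;> simp [rTrunc]

lemma rCF_eq (ε : ℤ → ℝ) (n : ℤ) : rCF 2 0 ε n = 1 / (2 * ε n) := by
  have h : (fun k => rTrunc 2 0 ε k n) = fun _ => 1 / (2 * ε n) :=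
    funext fun k => rTrunc_eq ε k n
  rw [rCF, h]
  exact tendsto_const_nhds.limUnder_eq

lemma pFun_eq (ε : ℤ → ℝ) : pFun 2 0 ε = 1 := by
  rw [pFun, tsum_eq_single 0]
  · simp
  · intro k hk; simp [zero_pow hk]

lemma qFun_eq (ε : ℤ → ℝ) (h : ∀ n : ℤ, ε n = 1 ∨ ε n = -1) :
    qFun 2 0 ε = ∑' n : ℕ,
      (-1 : ℝ) ^ n * (∏ j ∈ Finset.range (n + 1), ε (j : ℤ)) * (1/2 : ℝ) ^ (n + 1) := by
  rw [qFun]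
  apply tsum_congr
  intro n
  have hprod : ∏ j ∈ Finset.range (n + 1), rCF 2 0 ε (j : ℤ)
      = (∏ j ∈ Finset.range (n + 1), ε (j : ℤ)) * (1/2 : ℝ) ^ (n + 1) := by
    calc ∏ j ∈ Finset.range (n + 1), rCF 2 0 ε (j : ℤ)
        = ∏ j ∈ Finset.range (n + 1), (ε (j : ℤ) * (1/2 : ℝ)) := by
          apply Finset.prod_congr rfl
          intro j _
          rw [rCF_eq]
          rcases h (j : ℤ) with hj | hj <;> rw [hj] <;> norm_num
      _ = (∏ j ∈ Finset.range (n + 1), ε (j : ℤ)) * (1/2 : ℝ) ^ (n + 1) := by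
          rw [Finset.prod_mul_distrib, Finset.prod_const, Finset.card_range]
  rw [hprod, mul_assoc]

lemma tsum_half : ∑' n : ℕ, ((1:ℝ)/2) ^ (n + 1) = 1 := by
  have : ∀ n : ℕ, ((1:ℝ)/2) ^ (n + 1) = (1/2) * (1/2) ^ n := by
    intro n; ring
  rw [tsum_congr this, tsum_mul_left, tsum_geometric_of_lt_one (by norm_num) (by norm_num)]
  norm_num


/-- At `(a,b) = (2,0)` the admissible pruning front `P̂ = P ∩ A` is exactly the set of
sequences with head `(+1,-1,-1,-1,…)`, and the primary pruned region `D` is empty. -/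
theorem pruning_front_at_two_zero :
    ∀ ε : ℤ → ℝ, (∀ n : ℤ, ε n = 1 ∨ ε n = -1) →
      (((pFun 2 0 ε - qFun 2 0 ε = 0) ∧
          (∀ n : ℤ, 0 ≤ pFun 2 0 (fun m => ε (m + n)) - qFun 2 0 (fun m => ε (m + n)))) ↔
        (ε 0 = 1 ∧ ∀ n : ℤ, 1 ≤ n → ε n = -1)) ∧
      0 ≤ pFun 2 0 ε - qFun 2 0 ε := by
  -- general nonneg lemma
  have key : ∀ ε : ℤ → ℝ, (∀ n : ℤ, ε n = 1 ∨ ε n = -1) →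
      (0 ≤ pFun 2 0 ε - qFun 2 0 ε ∧
        (pFun 2 0 ε - qFun 2 0 ε = 0 ↔
          ∀ n : ℕ, (∏ j ∈ Finset.range (n + 1), ε (j : ℤ)) = (-1 : ℝ) ^ n)) := by
    intro ε h
    set P : ℕ → ℝ := fun n => ∏ j ∈ Finset.range (n + 1), ε (j : ℤ) with hP
    set f : ℕ → ℝ := fun n => (-1 : ℝ) ^ n * P n * (1/2 : ℝ) ^ (n + 1) with hf
    set g : ℕ → ℝ := fun n => ((1:ℝ)/2) ^ (n + 1) with hg
    have hPval : ∀ n, P n = 1 ∨ P n = -1 := by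
      intro n
      induction n with
      | zero => simpa [hP] using h 0
      | succ k ih =>
        have : P (k + 1) = P k * ε ((k : ℤ) + 1) := by
          simp [hP, Finset.prod_range_succ]
        rcases ih with h1 | h1 <;> rcases h ((k : ℤ) + 1) with h2 | h2 <;>
          simp [this, h1, h2]
    have hgpos : ∀ n, 0 < g n := fun n => by positivity
    have hfg : ∀ n, f n ≤ g n := by
      intro n
      rcases hPval n with h1 | h1 <;> rcases Nat.even_or_odd n with hp | hp <;>
        simp only [hf, hg, h1, hp.neg_one_pow] <;> nlinarith [hgpos n]
    have hgsum : Summable g := by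
      have := (summable_geometric_of_lt_one (r := (1/2:ℝ)) (by norm_num) (by norm_num)).mul_left
        ((1:ℝ)/2)
      simpa [hg, pow_succ'] using this
    have habs : ∀ n, |f n| = g n := by
      intro n
      rcases hPval n with h1 | h1 <;> rcases Nat.even_or_odd n with hp | hp <;>
        simp [hf, hg, h1, hp.neg_one_pow, abs_of_nonneg, (hgpos n).le, abs_of_nonpos]
    have hfsum : Summable f := by
      refine Summable.of_abs ?_
      simpa [funext habs] using hgsum
    have hq : qFun 2 0 ε = ∑' n, f n := by
      rw [qFun_eq ε h]
    have hgsum_val : ∑' n, g n = 1 := tsum_half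
    have hle : ∑' n, f n ≤ 1 := by
      rw [← hgsum_val]
      exact Summable.tsum_le_tsum hfg hfsum hgsum
    constructor
    · rw [pFun_eq, hq]; linarith
    · rw [pFun_eq, hq]
      constructor
      · intro heq
        have hsum1 : ∑' n, f n = 1 := by linarith
        intro n
        by_contra hne
        have hne' : P n ≠ (-1 : ℝ) ^ n := hne
        have hlt : f n < g n := by
          rcases Nat.even_or_odd n with hp | hp
          · have h1 : P n = -1 := by
              rcases hPval n with h1 | h1
              · exact absurd (by rw [h1, hp.neg_one_pow]) hne'
              · exact h1
            simp only [hf, hg, h1, hp.neg_one_pow]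
            nlinarith [hgpos n]
          · have h1 : P n = 1 := by
              rcases hPval n with h1 | h1
              · exact h1
              · exact absurd (by rw [h1, hp.neg_one_pow]) hne'
            simp only [hf, hg, h1, hp.neg_one_pow]
            nlinarith [hgpos n]
        have : ∑' n, f n < ∑' n, g n := Summable.tsum_lt_tsum hfg hlt hfsum hgsum
        rw [hgsum_val] at this
        linarith
      · intro hall
        have : ∀ n, f n = g n := by
          intro n
          have hPn : P n = (-1 : ℝ) ^ n := hall n
          simp only [hf, hg, hPn]
          rw [← mul_pow]
          norm_num
        rw [tsum_congr this, hgsum_val]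
        ring
  intro ε h
  obtain ⟨hnn, hiff⟩ := key ε h
  refine ⟨?_, hnn⟩
  constructor
  · rintro ⟨h0, -⟩
    have hprodAll := hiff.mp h0
    have hε0 : ε 0 = 1 := by simpa using hprodAll 0
    refine ⟨hε0, ?_⟩
    intro n hn
    obtain ⟨m, hm⟩ : ∃ m : ℕ, n = ((m : ℤ) + 1) := by
      refine ⟨(n - 1).toNat, ?_⟩
      omega
    have h1 := hprodAll (m + 1)
    have h2 := hprodAll m
    rw [Finset.prod_range_succ] at h1
    have hcast : ((m + 1 : ℕ) : ℤ) = n := by push_cast; omega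
    rw [hcast] at h1
    rw [h2] at h1
    have hne : ((-1 : ℝ)) ^ m ≠ 0 := by positivity
    have : ε n = (-1 : ℝ) ^ (m + 1) / (-1) ^ m := by
      field_simp at h1 ⊢
      linarith [h1]
    rw [this, pow_succ]
    field_simp
  · rintro ⟨h0, hneg⟩
    constructor
    · apply hiff.mpr
      intro n
      induction n with
      | zero => simpa using h0
      | succ k ih =>
        rw [Finset.prod_range_succ, ih]
        have : ε ((k + 1 : ℕ) : ℤ) = -1 := by
          apply hneg
          push_cast
          omega
        rw [this, pow_succ]
    · intro n
      exact ((key (fun m => ε (m + n)) (fun m => h (m + n)))).1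
end

section
/- Let ε ∈ Σ be a sequence whose head is (ε₀, ε₁, ε₂, …) = (+1, -1, -1, -1, …). Then the derivative of the function b ↦ (p - q)(ε)(2, b) at b = 0 equals 1/(2ε₋₂). -/
open Filter

/-! For `a = 2` and `|b| ≤ 1/2` the one-step maps `t ↦ 1/(±2 + b t)` send `[-2/3, 2/3]` into
itself and are contractions, so every continued fraction converges, is bounded by `2/3` and
satisfies its recursion. Since `ε₁ = ε₂ = ⋯ = -1`, every `r_n` with `n ≥ 1` is the fixed point
`ρ(b) = -1/(1 + √(1 + b))`, hence `q = r₀/(1 + ρ)` with `r₀ = 1/(2 + bρ)`, an explicit function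
of `b` with derivative `0` at `b = 0`. On the other side `p = 1 - b s₋₂ + O(b²)` and
`s₋₂ = -1/(2ε₋₂) + O(b)`, so `p'(0) = 1/(2ε₋₂)`. -/

open Topology Asymptotics

lemma le_abs_add_mul {e b t : ℝ} (he : 2 ≤ |e|) (hb : |b| ≤ 1 / 2) (ht : |t| ≤ 2 / 3) :
    5 / 3 ≤ |e + b * t| := by
  have hbt : |b * t| ≤ 1 / 3 := by
    rw [abs_mul]; nlinarith [abs_nonneg b, abs_nonneg t]
  have := abs_sub_abs_le_abs_add e (b * t)
  linarith

lemma abs_one_div_add_mul_le {e b t : ℝ} (he : 2 ≤ |e|) (hb : |b| ≤ 1 / 2) (ht : |t| ≤ 2 / 3) :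
    |1 / (e + b * t)| ≤ 2 / 3 := by
  have h := le_abs_add_mul he hb ht
  rw [abs_div, abs_one, div_le_iff₀ (by linarith)]
  linarith

lemma abs_one_div_add_mul_sub_le {e b t t' : ℝ} (he : 2 ≤ |e|) (hb : |b| ≤ 1 / 2)
    (ht : |t| ≤ 2 / 3) (ht' : |t'| ≤ 2 / 3) :
    |1 / (e + b * t) - 1 / (e + b * t')| ≤ 9 / 25 * |b| * |t - t'| := by
  have hD := le_abs_add_mul he hb ht
  have hD' := le_abs_add_mul he hb ht'
  have hne : e + b * t ≠ 0 := abs_pos.mp (by linarith)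
  have hne' : e + b * t' ≠ 0 := abs_pos.mp (by linarith)
  rw [div_sub_div _ _ hne hne', abs_div, abs_mul, div_le_iff₀ (by positivity),
    show 1 * (e + b * t') - (e + b * t) * 1 = b * (t' - t) by ring, abs_mul, abs_sub_comm t']
  nlinarith [mul_le_mul hD hD' (by norm_num) (abs_nonneg _),
    mul_nonneg (abs_nonneg b) (abs_nonneg (t - t'))]

lemma eq_zero_of_abs_le_half_succ {u : ℕ → ℝ} {C : ℝ} (hC : ∀ k, |u k| ≤ C)
    (hu : ∀ k, |u k| ≤ |u (k + 1)| / 2) : u 0 = 0 := by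
  have hdecay : ∀ m k, |u k| ≤ C * (1 / 2) ^ m := by
    intro m
    induction m with
    | zero => simpa using hC
    | succ m ih => intro k; rw [pow_succ]; linarith [hu k, ih (k + 1)]
  have hlim : Tendsto (fun m : ℕ => C * (1 / 2 : ℝ) ^ m) atTop (𝓝 0) := by
    simpa using (tendsto_pow_atTop_nhds_zero_of_lt_one (by norm_num : (0 : ℝ) ≤ 1 / 2)
      (by norm_num)).const_mul C
  exact abs_nonpos_iff.mp (ge_of_tendsto' hlim fun m => hdecay m 0)

lemma hasDerivAt_of_abs_sub_le_sq {f : ℝ → ℝ} {f' x C : ℝ}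
    (h : ∀ᶠ y in 𝓝 x, |f y - f x - (y - x) * f'| ≤ C * (y - x) ^ 2) : HasDerivAt f f' x := by
  rw [hasDerivAt_iff_isLittleO]
  have hsq : (fun y => (y - x) ^ 2) =o[𝓝 x] fun y => y - x :=
    (isLittleO_pow_id (by norm_num : 1 < 2)).comp_tendsto
      (tendsto_sub_nhds_zero_iff.mpr tendsto_id)
  refine IsBigO.trans_isLittleO (IsBigO.of_bound C ?_) hsq
  filter_upwards [h] with y hy
  simpa [Real.norm_eq_abs, smul_eq_mul, mul_comm] using hy

lemma abs_tsum_sub_two_le {f : ℕ → ℝ} {r : ℝ} (hr0 : 0 ≤ r) (hr1 : r < 1)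
    (hf : ∀ k, |f k| ≤ r ^ k) : |∑' k, f k - (f 0 + f 1)| ≤ r ^ 2 / (1 - r) := by
  have hsum : Summable f :=
    .of_norm_bounded (summable_geometric_of_lt_one hr0 hr1) fun k => by simpa using hf k
  rw [← hsum.sum_add_tsum_nat_add 2, Finset.sum_range_succ, Finset.sum_range_one,
    add_sub_cancel_left, ← Real.norm_eq_abs, div_eq_mul_inv]
  refine tsum_of_norm_bounded ((hasSum_geometric_of_lt_one hr0 hr1).mul_left (r ^ 2)) fun k => ?_
  simpa [pow_add, mul_comm] using hf (k + 2)

noncomputable def cfTrunc (e : ℤ → ℝ) (b : ℝ) (d : ℤ) : ℕ → ℤ → ℝ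
  | 0, n => 1 / e n
  | k + 1, n => 1 / (e n + b * cfTrunc e b d k (n + d))

noncomputable def cfLim (e : ℤ → ℝ) (b : ℝ) (d : ℤ) (n : ℤ) : ℝ :=
  limUnder atTop fun k => cfTrunc e b d k n

lemma rTrunc_eq_cfTrunc (a b : ℝ) (ε : ℤ → ℝ) :
    rTrunc a b ε = cfTrunc (fun n => a * ε n) b 1 := by
  funext k
  induction k with
  | zero => rfl
  | succ k ih => funext n; simp only [rTrunc, cfTrunc, ih]

lemma sTrunc_eq_cfTrunc (a b : ℝ) (ε : ℤ → ℝ) :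
    sTrunc a b ε = cfTrunc (fun n => -(a * ε n)) b (-1) := by
  funext k
  induction k with
  | zero => rfl
  | succ k ih => funext n; simp only [sTrunc, cfTrunc, ih, sub_eq_add_neg]

lemma rCF_eq_cfLim (a b : ℝ) (ε : ℤ → ℝ) (n : ℤ) :
    rCF a b ε n = cfLim (fun n => a * ε n) b 1 n := by
  rw [rCF, cfLim, rTrunc_eq_cfTrunc]

lemma sCF_eq_cfLim (a b : ℝ) (ε : ℤ → ℝ) (n : ℤ) :
    sCF a b ε n = cfLim (fun n => -(a * ε n)) b (-1) n := by
  rw [sCF, cfLim, sTrunc_eq_cfTrunc]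

section ContractiveContinuedFraction

variable {e : ℤ → ℝ} {b : ℝ} {d : ℤ}

lemma abs_cfTrunc_le (he : ∀ n, 2 ≤ |e n|) (hb : |b| ≤ 1 / 2) (k : ℕ) (n : ℤ) :
    |cfTrunc e b d k n| ≤ 2 / 3 := by
  induction k generalizing n with
  | zero =>
    rw [cfTrunc, abs_div, abs_one, div_le_iff₀ (by linarith [he n])]
    linarith [he n]
  | succ k ih => exact abs_one_div_add_mul_le (he n) hb (ih _)

lemma abs_cfTrunc_succ_sub_le (he : ∀ n, 2 ≤ |e n|) (hb : |b| ≤ 1 / 2) (k : ℕ) (n : ℤ) :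
    |cfTrunc e b d (k + 1) n - cfTrunc e b d k n| ≤ 4 / 3 * (1 / 2) ^ k := by
  induction k generalizing n with
  | zero =>
    have := abs_sub (cfTrunc e b d 1 n) (cfTrunc e b d 0 n)
    linarith [abs_cfTrunc_le (d := d) he hb 1 n, abs_cfTrunc_le (d := d) he hb 0 n]
  | succ k ih =>
    calc |cfTrunc e b d (k + 2) n - cfTrunc e b d (k + 1) n|
        ≤ 9 / 25 * |b| * |cfTrunc e b d (k + 1) (n + d) - cfTrunc e b d k (n + d)| :=
          abs_one_div_add_mul_sub_le (he n) hb (abs_cfTrunc_le he hb _ _)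
            (abs_cfTrunc_le he hb _ _)
      _ ≤ 1 / 2 * (4 / 3 * (1 / 2) ^ k) := by
          gcongr
          · linarith
          · exact ih _
      _ = 4 / 3 * (1 / 2) ^ (k + 1) := by ring

lemma tendsto_cfTrunc (he : ∀ n, 2 ≤ |e n|) (hb : |b| ≤ 1 / 2) (n : ℤ) :
    Tendsto (fun k => cfTrunc e b d k n) atTop (𝓝 (cfLim e b d n)) := by
  have hcauchy : CauchySeq fun k => cfTrunc e b d k n :=
    cauchySeq_of_le_geometric (1 / 2) (4 / 3) (by norm_num) fun k => by
      rw [Real.dist_eq, abs_sub_comm]; exact abs_cfTrunc_succ_sub_le he hb k n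
  obtain ⟨L, hL⟩ := cauchySeq_tendsto_of_complete hcauchy
  rwa [cfLim, hL.limUnder_eq]

lemma abs_cfLim_le (he : ∀ n, 2 ≤ |e n|) (hb : |b| ≤ 1 / 2) (n : ℤ) : |cfLim e b d n| ≤ 2 / 3 :=
  le_of_tendsto' (tendsto_cfTrunc he hb n).abs fun k => abs_cfTrunc_le he hb k n

lemma cfLim_eq (he : ∀ n, 2 ≤ |e n|) (hb : |b| ≤ 1 / 2) (n : ℤ) :
    cfLim e b d n = 1 / (e n + b * cfLim e b d (n + d)) := by
  have hne : e n + b * cfLim e b d (n + d) ≠ 0 :=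
    abs_pos.mp (by linarith [le_abs_add_mul (he n) hb (abs_cfLim_le (d := d) he hb (n + d))])
  have hstep : Tendsto (fun k => cfTrunc e b d (k + 1) n) atTop
      (𝓝 (1 / (e n + b * cfLim e b d (n + d)))) :=
    tendsto_const_nhds.div (((tendsto_cfTrunc he hb _).const_mul b).const_add _) hne
  exact tendsto_nhds_unique ((tendsto_add_atTop_iff_nat 1).mpr (tendsto_cfTrunc he hb n)) hstep

lemma abs_cfLim_sub_one_div_le (he : ∀ n, 2 ≤ |e n|) (hb : |b| ≤ 1 / 2) (n : ℤ) :
    |cfLim e b d n - 1 / e n| ≤ |b| / 2 := by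
  have h := abs_one_div_add_mul_sub_le (he n) hb (abs_cfLim_le (d := d) he hb (n + d))
    (by norm_num : |(0 : ℝ)| ≤ 2 / 3)
  rw [mul_zero, add_zero, sub_zero, ← cfLim_eq he hb] at h
  nlinarith [abs_cfLim_le (d := d) he hb (n + d), abs_nonneg b]

lemma cfLim_eq_of_fixedPoint (he : ∀ n, 2 ≤ |e n|) (hb : |b| ≤ 1 / 2) {n : ℤ} {c x : ℝ}
    (hc : ∀ k : ℕ, e (n + k * d) = c) (hx : x = 1 / (c + b * x)) (hx' : |x| ≤ 2 / 3) :
    cfLim e b d n = x := by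
  set u : ℕ → ℝ := fun k => cfLim e b d (n + k * d) - x
  suffices u 0 = 0 by simpa [u, sub_eq_zero] using this
  refine eq_zero_of_abs_le_half_succ (C := 4 / 3) (fun k => ?_) fun k => ?_
  · have := abs_sub (cfLim e b d (n + k * d)) x
    linarith [abs_cfLim_le (d := d) he hb (n + k * d)]
  · have hshift : n + k * d + d = n + ↑(k + 1) * d := by push_cast; ring
    have hrec : cfLim e b d (n + k * d) = 1 / (c + b * cfLim e b d (n + ↑(k + 1) * d)) := by
      rw [cfLim_eq he hb, hshift, hc]
    have hc2 : 2 ≤ |c| := by simpa using hc 0 ▸ he (n + (0 : ℕ) * d)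
    have hcontr := abs_one_div_add_mul_sub_le hc2 hb
      (abs_cfLim_le (d := d) he hb (n + ↑(k + 1) * d)) hx'
    rw [← hrec, ← hx] at hcontr
    simp only [u]
    nlinarith [abs_nonneg (cfLim e b d (n + ↑(k + 1) * d) - x)]

end ContractiveContinuedFraction

/-- The root of `b x² - 2x - 1 = 0` near `-1/2`: the value of `1/(-2 + b/(-2 + ⋯))`. -/
noncomputable def periodicCF (b : ℝ) : ℝ := -(1 + √(1 + b))⁻¹

lemma periodicCF_zero : periodicCF 0 = -(1 / 2) := by
  norm_num [periodicCF]

lemma periodicCF_eq {b : ℝ} (hb : -1 ≤ b) : periodicCF b = 1 / (-2 + b * periodicCF b) := by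
  rw [periodicCF]
  set u := √(1 + b)
  have hu : 1 + u ≠ 0 := by positivity
  rw [show b = u ^ 2 - 1 by linarith [Real.sq_sqrt (by linarith : (0 : ℝ) ≤ 1 + b)]]
  rw [show -2 + (u ^ 2 - 1) * -(1 + u)⁻¹ = -(1 + u) by field_simp; ring, one_div, inv_neg]

lemma abs_periodicCF_le {b : ℝ} (hb : -3 / 4 ≤ b) : |periodicCF b| ≤ 2 / 3 := by
  have hsqrt : 1 / 2 ≤ √(1 + b) := Real.le_sqrt_of_sq_le (by linarith)
  rw [periodicCF, abs_neg, abs_inv, abs_of_pos (by linarith), inv_le_comm₀ (by linarith)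
    (by norm_num)]
  linarith

lemma hasDerivAt_periodicCF : HasDerivAt periodicCF (1 / 8) 0 := by
  have h : HasDerivAt (fun b : ℝ => -(1 + √(1 + b))⁻¹) _ 0 :=
    (((hasDerivAt_id (0 : ℝ)).const_add 1).sqrt (by norm_num)).const_add 1
      |>.inv (by positivity) |>.neg
  exact h.congr_deriv (by norm_num)

section SignSequence

variable {ε : ℤ → ℝ} {b : ℝ}

lemma two_le_abs_two_mul (hε : ∀ n, ε n = 1 ∨ ε n = -1) (n : ℤ) : 2 ≤ |2 * ε n| := by
  rcases hε n with h | h <;> norm_num [h]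

lemma rCF_of_one_le (hε : ∀ n, ε n = 1 ∨ ε n = -1) (hε1 : ∀ n : ℤ, 1 ≤ n → ε n = -1)
    (hb : |b| ≤ 1 / 2) {n : ℤ} (hn : 1 ≤ n) : rCF 2 b ε n = periodicCF b := by
  have hb' := abs_le.mp hb
  rw [rCF_eq_cfLim]
  refine cfLim_eq_of_fixedPoint (two_le_abs_two_mul hε) hb (c := -2) (fun k => ?_)
    (periodicCF_eq (by linarith)) (abs_periodicCF_le (by linarith))
  rw [hε1 _ (by linarith [(Nat.cast_nonneg k : (0 : ℤ) ≤ k)])]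
  norm_num

lemma rCF_zero (hε : ∀ n, ε n = 1 ∨ ε n = -1) (hε0 : ε 0 = 1)
    (hε1 : ∀ n : ℤ, 1 ≤ n → ε n = -1) (hb : |b| ≤ 1 / 2) :
    rCF 2 b ε 0 = 1 / (2 + b * periodicCF b) := by
  rw [rCF_eq_cfLim, cfLim_eq (two_le_abs_two_mul hε) hb, ← rCF_eq_cfLim, zero_add,
    rCF_of_one_le hε hε1 hb le_rfl, hε0, mul_one]

/-- Since `r₁ = r₂ = ⋯`, `q` is a geometric series. -/
lemma qFun_eq_s9 (hε : ∀ n, ε n = 1 ∨ ε n = -1) (hε0 : ε 0 = 1)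
    (hε1 : ∀ n : ℤ, 1 ≤ n → ε n = -1) (hb : |b| ≤ 1 / 2) :
    qFun 2 b ε = (2 + b * periodicCF b)⁻¹ * (1 + periodicCF b)⁻¹ := by
  have hterm : ∀ n : ℕ, (-1 : ℝ) ^ n * ∏ j ∈ Finset.range (n + 1), rCF 2 b ε j
      = (2 + b * periodicCF b)⁻¹ * (-periodicCF b) ^ n := fun n => by
    rw [Finset.prod_range_succ', Finset.prod_congr rfl fun j _ =>
      rCF_of_one_le hε hε1 hb (by omega : (1 : ℤ) ≤ (j + 1 : ℕ)), Finset.prod_const,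
      Finset.card_range, Nat.cast_zero, rCF_zero hε hε0 hε1 hb, neg_pow]
    ring
  have hρ : ‖-periodicCF b‖ < 1 := by
    rw [norm_neg, Real.norm_eq_abs]
    linarith [abs_periodicCF_le (by linarith [abs_le.mp hb] : -3 / 4 ≤ b)]
  rw [qFun, tsum_congr hterm, tsum_mul_left, tsum_geometric_of_norm_lt_one hρ, sub_neg_eq_add]

lemma hasDerivAt_qFun (hε : ∀ n, ε n = 1 ∨ ε n = -1) (hε0 : ε 0 = 1)
    (hε1 : ∀ n : ℤ, 1 ≤ n → ε n = -1) : HasDerivAt (fun b => qFun 2 b ε) 0 0 := by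
  have hclosed : HasDerivAt (fun b => (2 + b * periodicCF b)⁻¹ * (1 + periodicCF b)⁻¹) 0 0 := by
    have h : HasDerivAt (fun b => (2 + b * periodicCF b)⁻¹ * (1 + periodicCF b)⁻¹) _ 0 :=
      ((((hasDerivAt_id (0 : ℝ)).mul hasDerivAt_periodicCF).const_add 2).inv
        (by norm_num [periodicCF_zero])).mul
        ((hasDerivAt_periodicCF.const_add 1).inv (by norm_num [periodicCF_zero]))
    exact h.congr_deriv (by norm_num [periodicCF_zero])
  refine hclosed.congr_of_eventuallyEq ?_
  filter_upwards [Metric.closedBall_mem_nhds (0 : ℝ) (by norm_num : (0 : ℝ) < 1 / 2)] with b hb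
  exact qFun_eq_s9 hε hε0 hε1 (by simpa using hb)

lemma abs_pFun_sub_le (hε : ∀ n, ε n = 1 ∨ ε n = -1) (hb : |b| ≤ 1 / 2) :
    |pFun 2 b ε - 1 - b * (1 / (2 * ε (-2)))| ≤ 2 * b ^ 2 := by
  have he : ∀ n, 2 ≤ |-(2 * ε n)| := fun n => by simpa using two_le_abs_two_mul hε n
  have hs : ∀ n, |sCF 2 b ε n| ≤ 2 / 3 := fun n => by
    rw [sCF_eq_cfLim]; exact abs_cfLim_le he hb n
  have hterm : ∀ k, |(-b) ^ k * ∏ j ∈ Finset.range k, sCF 2 b ε (-2 - j)| ≤ (2 / 3 * |b|) ^ k :=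
    fun k => by
      rw [abs_mul, abs_pow, abs_neg, Finset.abs_prod, mul_pow, mul_comm]
      gcongr
      exact (Finset.prod_le_prod (fun _ _ => abs_nonneg _) fun j _ => hs _).trans_eq
        (by simp [div_pow])
  have htail := abs_tsum_sub_two_le (by positivity) (by linarith [abs_nonneg b]) hterm
  have hhead : |sCF 2 b ε (-2) - 1 / -(2 * ε (-2))| ≤ |b| / 2 := by
    rw [sCF_eq_cfLim]; exact abs_cfLim_sub_one_div_le he hb (-2)
  simp only [Finset.prod_range_zero, Finset.prod_range_one, pow_zero, pow_one, one_mul,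
    Nat.cast_zero, sub_zero] at htail
  rw [← pFun] at htail
  have hr : (2 / 3 * |b|) ^ 2 / (1 - 2 / 3 * |b|) ≤ 2 / 3 * b ^ 2 := by
    rw [div_le_iff₀ (by linarith [abs_nonneg b]), mul_pow, sq_abs]
    nlinarith [abs_nonneg b, sq_nonneg b]
  calc |pFun 2 b ε - 1 - b * (1 / (2 * ε (-2)))|
      = |(pFun 2 b ε - (1 + -b * sCF 2 b ε (-2)))
          - b * (sCF 2 b ε (-2) - 1 / -(2 * ε (-2)))| := by rw [div_neg]; ring_nf
    _ ≤ 2 / 3 * b ^ 2 + |b| * (|b| / 2) := by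
        refine (abs_sub _ _).trans (add_le_add (htail.trans hr) ?_)
        rw [abs_mul]; exact mul_le_mul_of_nonneg_left hhead (abs_nonneg b)
    _ ≤ 2 * b ^ 2 := by nlinarith [sq_abs b, sq_nonneg b]

lemma hasDerivAt_pFun (hε : ∀ n, ε n = 1 ∨ ε n = -1) :
    HasDerivAt (fun b => pFun 2 b ε) (1 / (2 * ε (-2))) 0 := by
  have hp0 : pFun 2 0 ε = 1 := by
    simpa [sub_eq_zero] using abs_pFun_sub_le hε (b := 0) (by norm_num)
  refine hasDerivAt_of_abs_sub_le_sq (C := 2) ?_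
  filter_upwards [Metric.closedBall_mem_nhds (0 : ℝ) (by norm_num : (0 : ℝ) < 1 / 2)] with b hb
  rw [hp0, sub_zero]
  exact abs_pFun_sub_le hε (by simpa using hb)

end SignSequence

theorem deriv_p_sub_q_at_two :
    ∀ ε : ℤ → ℝ, (∀ n : ℤ, ε n = 1 ∨ ε n = -1) →
      ε 0 = 1 → (∀ n : ℤ, 1 ≤ n → ε n = -1) →
      HasDerivAt (fun b => pFun 2 b ε - qFun 2 b ε) (1 / (2 * ε (-2))) 0 := by
  intro ε hε hε0 hε1
  exact ((hasDerivAt_pFun hε).sub (hasDerivAt_qFun hε hε0 hε1)).congr_deriv (sub_zero _)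
end

section
/- For every a > 1 and every ε ∈ Σ, the derivative of the function b ↦ p(ε)(a, b) at b = 0 equals 1/(a ε₋₂). -/
open Filter

open Topology Asymptotics

/-! For `|b| < 1` and `1 + |b| ≤ a`, each map `x ↦ 1 / (-a ε_n + b x)` sends `[-1, 1]` into
itself and is `|b|`-Lipschitz there. Hence the truncations of `s_n` converge geometrically,
`|s_n| ≤ 1`, and `s_n(b) = s_n(0) + O(b)` with `s_n(0) = -1 / (a ε_n)`. The `k`-th term of `p`
is then bounded by `|b| ^ k`, so `p(b) = 1 - b s₋₂(0) + O(b²)`. -/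

lemma abs_one_div_sub_one_div_le {x y : ℝ} (hx : 1 ≤ |x|) (hy : 1 ≤ |y|) :
    |1 / x - 1 / y| ≤ |x - y| := by
  have hx0 : x ≠ 0 := abs_pos.mp (by linarith)
  have hy0 : y ≠ 0 := abs_pos.mp (by linarith)
  rw [div_sub_div _ _ hx0 hy0, one_mul, mul_one, abs_div, abs_mul, abs_sub_comm]
  exact div_le_self (abs_nonneg _) (one_le_mul_of_one_le_of_one_le hx hy)

section Denominator

variable {b c x y : ℝ}

lemma one_le_abs_neg_add_mul (hc : 1 + |b| ≤ |c|) (hx : |x| ≤ 1) : 1 ≤ |-c + b * x| := by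
  have hbx : |b * x| ≤ |b| := by
    rw [abs_mul]; exact mul_le_of_le_one_right (abs_nonneg b) hx
  calc 1 ≤ |c| - |b * x| := by linarith
    _ = |-c| - |b * x| := by rw [abs_neg]
    _ ≤ |-c + b * x| := abs_sub_abs_le_abs_add _ _

lemma abs_one_div_neg_add_mul_le (hc : 1 + |b| ≤ |c|) (hx : |x| ≤ 1) :
    |1 / (-c + b * x)| ≤ 1 := by
  rw [abs_div, abs_one]
  exact div_le_one_of_le₀ (one_le_abs_neg_add_mul hc hx) (abs_nonneg _)

lemma abs_one_div_neg_add_mul_sub_le (hc : 1 + |b| ≤ |c|) (hx : |x| ≤ 1) (hy : |y| ≤ 1) :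
    |1 / (-c + b * x) - 1 / (-c + b * y)| ≤ |b| * |x - y| :=
  calc _ ≤ |(-c + b * x) - (-c + b * y)| :=
        abs_one_div_sub_one_div_le (one_le_abs_neg_add_mul hc hx) (one_le_abs_neg_add_mul hc hy)
    _ = |b| * |x - y| := by rw [← abs_mul]; ring_nf

end Denominator

section ContinuedFraction

variable {a b : ℝ} {ε : ℤ → ℝ}

lemma sTrunc_zero_eq (n : ℤ) : sTrunc a b ε 0 n = 1 / (-(a * ε n) + b * 0) := by
  simp [sTrunc]

lemma abs_sTrunc_le (h : ∀ n, 1 + |b| ≤ |a * ε n|) (k : ℕ) (n : ℤ) :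
    |sTrunc a b ε k n| ≤ 1 := by
  induction k generalizing n with
  | zero => rw [sTrunc_zero_eq]; exact abs_one_div_neg_add_mul_le (h n) (by simp)
  | succ k ih => exact abs_one_div_neg_add_mul_le (h n) (ih _)

lemma abs_sTrunc_succ_sub_le (h : ∀ n, 1 + |b| ≤ |a * ε n|) (k : ℕ) (n : ℤ) :
    |sTrunc a b ε (k + 1) n - sTrunc a b ε k n| ≤ |b| ^ (k + 1) := by
  induction k generalizing n with
  | zero =>
    rw [sTrunc_zero_eq]
    refine (abs_one_div_neg_add_mul_sub_le (h n) (abs_sTrunc_le h 0 _) (by simp)).trans ?_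
    simpa using mul_le_of_le_one_right (abs_nonneg b) (abs_sTrunc_le h 0 (n - 1))
  | succ k ih =>
    calc _ ≤ |b| * |sTrunc a b ε (k + 1) (n - 1) - sTrunc a b ε k (n - 1)| :=
          abs_one_div_neg_add_mul_sub_le (h n) (abs_sTrunc_le h _ _) (abs_sTrunc_le h _ _)
      _ ≤ |b| * |b| ^ (k + 1) := by gcongr; exact ih _
      _ = |b| ^ (k + 2) := by ring

lemma tendsto_sTrunc_sCF (h : ∀ n, 1 + |b| ≤ |a * ε n|) (hb : |b| < 1) (n : ℤ) :
    Tendsto (fun k => sTrunc a b ε k n) atTop (𝓝 (sCF a b ε n)) := by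
  have hcauchy : CauchySeq (fun k => sTrunc a b ε k n) := by
    refine cauchySeq_of_le_geometric |b| |b| hb fun k => ?_
    rw [dist_comm, Real.dist_eq, ← pow_succ']
    exact abs_sTrunc_succ_sub_le h k n
  obtain ⟨l, hl⟩ := cauchySeq_tendsto_of_complete hcauchy
  rwa [sCF, hl.limUnder_eq]

lemma abs_sCF_le (h : ∀ n, 1 + |b| ≤ |a * ε n|) (hb : |b| < 1) (n : ℤ) :
    |sCF a b ε n| ≤ 1 :=
  le_of_tendsto (tendsto_sTrunc_sCF h hb n).abs
    (Eventually.of_forall fun k => abs_sTrunc_le h k n)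

lemma sCF_eq (h : ∀ n, 1 + |b| ≤ |a * ε n|) (hb : |b| < 1) (n : ℤ) :
    sCF a b ε n = 1 / (-(a * ε n) + b * sCF a b ε (n - 1)) := by
  have hden : -(a * ε n) + b * sCF a b ε (n - 1) ≠ 0 :=
    abs_pos.mp ((one_le_abs_neg_add_mul (h n) (abs_sCF_le h hb _)).trans_lt' one_pos)
  refine tendsto_nhds_unique ((tendsto_sTrunc_sCF h hb n).comp (tendsto_add_atTop_nat 1)) ?_
  exact tendsto_const_nhds.div
    (tendsto_const_nhds.add ((tendsto_sTrunc_sCF h hb (n - 1)).const_mul b)) hden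

lemma sCF_b_zero (a : ℝ) (ε : ℤ → ℝ) (n : ℤ) : sCF a 0 ε n = 1 / (-(a * ε n)) := by
  have hconst : ∀ k, sTrunc a 0 ε k n = 1 / (-(a * ε n)) := by
    rintro (_ | k) <;> simp [sTrunc]
  simp only [sCF, hconst]
  exact tendsto_const_nhds.limUnder_eq

lemma abs_sCF_sub_sCF_b_zero_le (h : ∀ n, 1 + |b| ≤ |a * ε n|) (hb : |b| < 1) (n : ℤ) :
    |sCF a b ε n - sCF a 0 ε n| ≤ |b| := by
  have hs := abs_sCF_le h hb (n - 1)
  have hlip := abs_one_div_neg_add_mul_sub_le (h n) hs (y := 0) (by simp)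
  rw [mul_zero, add_zero, sub_zero] at hlip
  rw [sCF_eq h hb n, sCF_b_zero]
  exact hlip.trans (mul_le_of_le_one_right (abs_nonneg b) hs)

end ContinuedFraction

lemma abs_tsum_sub_sub_le_of_abs_le_pow {f : ℕ → ℝ} {r : ℝ} (hr0 : 0 ≤ r) (hr1 : r < 1)
    (hf : ∀ k, |f k| ≤ r ^ k) : |∑' k, f k - f 0 - f 1| ≤ r ^ 2 * (1 - r)⁻¹ := by
  have hsum : Summable f := .of_norm_bounded (summable_geometric_of_lt_one hr0 hr1) hf
  have htail : ∑' k, f k - f 0 - f 1 = ∑' k, f (k + 2) := by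
    rw [← hsum.sum_add_tsum_nat_add 2, Finset.sum_range_succ, Finset.sum_range_one]
    ring
  have hgeom : HasSum (fun k => r ^ (k + 2)) (r ^ 2 * (1 - r)⁻¹) := by
    simpa [pow_add, mul_comm] using (hasSum_geometric_of_lt_one hr0 hr1).mul_left (r ^ 2)
  rw [htail]
  exact tsum_of_norm_bounded (f := fun k => f (k + 2)) hgeom fun k => hf (k + 2)

lemma abs_pFun_sub_one_add_mul_le {a b : ℝ} {ε : ℤ → ℝ} (h : ∀ n, 1 + |b| ≤ |a * ε n|)
    (hb : |b| ≤ 1 / 2) : |pFun a b ε - 1 + b * sCF a 0 ε (-2)| ≤ 3 * b ^ 2 := by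
  have hb1 : |b| < 1 := by linarith
  set f : ℕ → ℝ := fun k => (-b) ^ k * ∏ j ∈ Finset.range k, sCF a b ε (-2 - (j : ℤ))
  have hf : ∀ k, |f k| ≤ |b| ^ k := fun k => by
    rw [abs_mul, abs_pow, abs_neg, Finset.abs_prod]
    exact mul_le_of_le_one_right (by positivity)
      (Finset.prod_le_one (fun _ _ => abs_nonneg _) fun _ _ => abs_sCF_le h hb1 _)
  have hlin : |f 1 + b * sCF a 0 ε (-2)| ≤ b ^ 2 := by
    have : f 1 + b * sCF a 0 ε (-2) = -(b * (sCF a b ε (-2) - sCF a 0 ε (-2))) := by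
      simp only [f, pow_one, Finset.prod_range_one, Nat.cast_zero, sub_zero]; ring
    rw [this, abs_neg, abs_mul, ← sq_abs, sq]
    exact mul_le_mul_of_nonneg_left (abs_sCF_sub_sCF_b_zero_le h hb1 _) (abs_nonneg b)
  have hsplit : pFun a b ε - 1 + b * sCF a 0 ε (-2)
      = (∑' k, f k - f 0 - f 1) + (f 1 + b * sCF a 0 ε (-2)) := by
    simp [pFun, f]
  have htail := abs_tsum_sub_sub_le_of_abs_le_pow (abs_nonneg b) hb1 hf
  have hinv : (1 - |b|)⁻¹ ≤ 2 := by
    rw [inv_le_comm₀ (by linarith) two_pos]; linarith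
  rw [hsplit]
  calc _ ≤ |b| ^ 2 * (1 - |b|)⁻¹ + b ^ 2 := (abs_add_le _ _).trans (add_le_add htail hlin)
    _ ≤ |b| ^ 2 * 2 + b ^ 2 := by gcongr
    _ = 3 * b ^ 2 := by rw [sq_abs]; ring

theorem deriv_p_at_zero :
    ∀ a : ℝ, 1 < a → ∀ ε : ℤ → ℝ, (∀ n : ℤ, ε n = 1 ∨ ε n = -1) →
      HasDerivAt (fun b => pFun a b ε) (1 / (a * ε (-2))) 0 := by
  intro a ha ε hε
  have hbound : ∀ᶠ b in 𝓝 0, |pFun a b ε - 1 + b * sCF a 0 ε (-2)| ≤ 3 * b ^ 2 := by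
    filter_upwards [eventually_abs_sub_lt 0 (lt_min (sub_pos.2 ha) one_half_pos)] with b hb
    rw [sub_zero, lt_min_iff] at hb
    refine abs_pFun_sub_one_add_mul_le (fun n => ?_) hb.2.le
    have hεn : |ε n| = 1 := by rcases hε n with hn | hn <;> simp [hn]
    rw [abs_mul, hεn, mul_one, abs_of_pos (zero_lt_one.trans ha)]
    linarith
  have hp0 : pFun a 0 ε = 1 := by simpa [sub_eq_zero] using hbound.self_of_nhds
  have hd : 1 / (a * ε (-2)) = -sCF a 0 ε (-2) := by rw [sCF_b_zero, div_neg, neg_neg]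
  rw [hasDerivAt_iff_isLittleO_nhds_zero, hd]
  refine (IsBigO.of_bound 3 ?_).trans_isLittleO (isLittleO_pow_id one_lt_two)
  filter_upwards [hbound] with b hb
  simpa [hp0] using hb
end

section
/- For every a > 1, every ε ∈ Σ, and every n ≥ 2, writing T_n(a,b) = r₀(ε)(a,b) · r₁(ε)(a,b) ⋯ r_n(ε)(a,b), the derivative of b ↦ T_n(a,b) at b = 0 equals -(1/a^{n+3}) · ( Σ_{i=0}^{n-1} (ε₀ε₁⋯εₙ with the two factors ε_i and ε_{i+1} omitted) + (ε₀ε₁⋯εₙ₊₁ with the factor εₙ omitted) ). -/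
open Filter

/-!
For `|b| ≤ a² / 8` the maps `x ↦ 1 / (aε_n + b x)` send `[-2/a, 2/a]` into itself and are
`1/2`-Lipschitz there, so the truncations converge geometrically and the limits satisfy
`r_n = 1 / (aε_n + b r_{n+1})`. This recursion gives the slope
`(r_n(b) - r_n(0)) / b = -r_{n+1}(b) / (aε_n (aε_n + b r_{n+1}(b)))`,
which tends to `-ε_{n+1} / a³` since `r_{n+1}(b) → ε_{n+1} / a`.
The product rule, with `r_j(0) = ε_j / a` and `ε_{i+1}² = 1`, then yields the formula.
-/

open Topology

lemma eventually_abs_le_nhds_zero {c : ℝ} (hc : 0 < c) : ∀ᶠ b : ℝ in 𝓝 0, |b| ≤ c :=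
  (continuous_abs.tendsto' 0 0 abs_zero).eventually (eventually_le_nhds hc)

lemma one_div_mul_eq_div_of_abs_eq_one {a e : ℝ} (he : |e| = 1) : 1 / (a * e) = e / a := by
  have he' : e * e = 1 := by rw [← abs_mul_abs_self, he, one_mul]
  rw [one_div, mul_inv, inv_eq_of_mul_eq_one_right he', div_eq_inv_mul]

section OneDivAddMul

variable {a b u x y : ℝ}

lemma half_le_abs_add_mul (ha : 0 < a) (hu : |u| = a) (hb : |b| ≤ a ^ 2 / 8)
    (hx : |x| ≤ 2 / a) : a / 2 ≤ |u + b * x| := by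
  have hbx : |b * x| ≤ a / 4 :=
    calc |b * x| = |b| * |x| := abs_mul b x
      _ ≤ a ^ 2 / 8 * (2 / a) := mul_le_mul hb hx (abs_nonneg x) (by positivity)
      _ = a / 4 := by field_simp; ring
  have := abs_sub (u + b * x) (b * x)
  rw [add_sub_cancel_right, hu] at this
  linarith

lemma abs_one_div_add_mul_le_s15 (ha : 0 < a) (hu : |u| = a) (hb : |b| ≤ a ^ 2 / 8)
    (hx : |x| ≤ 2 / a) : |1 / (u + b * x)| ≤ 2 / a := by
  rw [abs_div, abs_one, div_le_div_iff₀ (by linarith [half_le_abs_add_mul ha hu hb hx]) ha]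
  linarith [half_le_abs_add_mul ha hu hb hx]

lemma abs_one_div_add_mul_sub_le_s15 (ha : 0 < a) (hu : |u| = a) (hb : |b| ≤ a ^ 2 / 8)
    (hx : |x| ≤ 2 / a) (hy : |y| ≤ 2 / a) :
    |1 / (u + b * x) - 1 / (u + b * y)| ≤ |x - y| / 2 := by
  have hdx := half_le_abs_add_mul ha hu hb hx
  have hdy := half_le_abs_add_mul ha hu hb hy
  have hdx0 : u + b * x ≠ 0 := abs_pos.mp (by linarith)
  have hdy0 : u + b * y ≠ 0 := abs_pos.mp (by linarith)
  rw [div_sub_div _ _ hdx0 hdy0, abs_div, abs_mul]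
  calc |1 * (u + b * y) - (u + b * x) * 1| / (|u + b * x| * |u + b * y|)
      = |b| * |x - y| / (|u + b * x| * |u + b * y|) := by
        rw [show 1 * (u + b * y) - (u + b * x) * 1 = b * (y - x) by ring, abs_mul, abs_sub_comm]
    _ ≤ a ^ 2 / 8 * |x - y| / (a / 2 * (a / 2)) :=
        div_le_div₀ (by positivity) (mul_le_mul_of_nonneg_right hb (abs_nonneg _))
          (by positivity) (mul_le_mul hdx hdy (by positivity) (abs_nonneg _))
    _ = |x - y| / 2 := by field_simp; ring

end OneDivAddMul

section ContinuedFraction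

variable {a b : ℝ} {ε : ℤ → ℝ}

lemma abs_mul_eps (ha : 0 < a) (hε : ∀ n, |ε n| = 1) (n : ℤ) : |a * ε n| = a := by
  rw [abs_mul, hε, mul_one, abs_of_pos ha]

lemma abs_rTrunc_le (ha : 0 < a) (hε : ∀ n, |ε n| = 1) (hb : |b| ≤ a ^ 2 / 8)
    (k : ℕ) (n : ℤ) : |rTrunc a b ε k n| ≤ 2 / a := by
  induction k generalizing n with
  | zero =>
    simpa [rTrunc] using
      abs_one_div_add_mul_le_s15 (x := 0) ha (abs_mul_eps ha hε n) hb (by simp; positivity)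
  | succ k ih => exact abs_one_div_add_mul_le_s15 ha (abs_mul_eps ha hε n) hb (ih (n + 1))

lemma abs_rTrunc_succ_sub_le (ha : 0 < a) (hε : ∀ n, |ε n| = 1) (hb : |b| ≤ a ^ 2 / 8)
    (k : ℕ) (n : ℤ) :
    |rTrunc a b ε (k + 1) n - rTrunc a b ε k n| ≤ 4 / a * (1 / 2) ^ k := by
  induction k generalizing n with
  | zero =>
    calc |rTrunc a b ε 1 n - rTrunc a b ε 0 n|
        ≤ |rTrunc a b ε 1 n| + |rTrunc a b ε 0 n| := abs_sub _ _
      _ ≤ 2 / a + 2 / a := add_le_add (abs_rTrunc_le ha hε hb _ _) (abs_rTrunc_le ha hε hb _ _)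
      _ = 4 / a * (1 / 2) ^ 0 := by ring
  | succ k ih =>
    calc |rTrunc a b ε (k + 2) n - rTrunc a b ε (k + 1) n|
        ≤ |rTrunc a b ε (k + 1) (n + 1) - rTrunc a b ε k (n + 1)| / 2 :=
          abs_one_div_add_mul_sub_le_s15 ha (abs_mul_eps ha hε n) hb
            (abs_rTrunc_le ha hε hb _ _) (abs_rTrunc_le ha hε hb _ _)
      _ ≤ 4 / a * (1 / 2) ^ k / 2 := by gcongr; exact ih (n + 1)
      _ = 4 / a * (1 / 2) ^ (k + 1) := by ring

lemma tendsto_rTrunc (ha : 0 < a) (hε : ∀ n, |ε n| = 1) (hb : |b| ≤ a ^ 2 / 8) (n : ℤ) :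
    Tendsto (fun k => rTrunc a b ε k n) atTop (𝓝 (rCF a b ε n)) := by
  have hcauchy : CauchySeq (fun k => rTrunc a b ε k n) :=
    cauchySeq_of_le_geometric (1 / 2) (4 / a) (by norm_num) fun k => by
      rw [Real.dist_eq, abs_sub_comm]
      exact abs_rTrunc_succ_sub_le ha hε hb k n
  obtain ⟨x, hx⟩ := cauchySeq_tendsto_of_complete hcauchy
  rwa [rCF, hx.limUnder_eq]

lemma abs_rCF_le (ha : 0 < a) (hε : ∀ n, |ε n| = 1) (hb : |b| ≤ a ^ 2 / 8) (n : ℤ) :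
    |rCF a b ε n| ≤ 2 / a :=
  le_of_tendsto (tendsto_rTrunc ha hε hb n).abs
    (Eventually.of_forall fun k => abs_rTrunc_le ha hε hb k n)

lemma rCF_eq_one_div (ha : 0 < a) (hε : ∀ n, |ε n| = 1) (hb : |b| ≤ a ^ 2 / 8) (n : ℤ) :
    rCF a b ε n = 1 / (a * ε n + b * rCF a b ε (n + 1)) := by
  have hden : a * ε n + b * rCF a b ε (n + 1) ≠ 0 := abs_pos.mp <| by
    linarith [half_le_abs_add_mul ha (abs_mul_eps ha hε n) hb (abs_rCF_le ha hε hb (n + 1))]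
  have hlim : Tendsto (fun k => rTrunc a b ε (k + 1) n) atTop
      (𝓝 (1 / (a * ε n + b * rCF a b ε (n + 1)))) :=
    tendsto_const_nhds.div
      (tendsto_const_nhds.add ((tendsto_rTrunc ha hε hb (n + 1)).const_mul b)) hden
  exact tendsto_nhds_unique ((tendsto_rTrunc ha hε hb n).comp (tendsto_add_atTop_nat 1)) hlim

lemma rCF_zero_s15 (ha : 0 < a) (hε : ∀ n, |ε n| = 1) (n : ℤ) : rCF a 0 ε n = ε n / a := by
  rw [rCF_eq_one_div ha hε (by simp; positivity), zero_mul, add_zero,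
    one_div_mul_eq_div_of_abs_eq_one (hε n)]

lemma continuousAt_rCF_zero (ha : 0 < a) (hε : ∀ n, |ε n| = 1) (n : ℤ) :
    ContinuousAt (fun b => rCF a b ε n) 0 := by
  have hsmall := eventually_abs_le_nhds_zero (show 0 < a ^ 2 / 8 by positivity)
  have htail : Tendsto (fun b => b * rCF a b ε (n + 1)) (𝓝 0) (𝓝 0) := by
    refine squeeze_zero_norm' ?_
      (by simpa using (tendsto_id (x := 𝓝 (0 : ℝ))).abs.mul_const (2 / a))
    filter_upwards [hsmall] with b hb
    rw [Real.norm_eq_abs, abs_mul]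
    exact mul_le_mul_of_nonneg_left (abs_rCF_le ha hε hb _) (abs_nonneg b)
  have hlim := (tendsto_const_nhds (x := a * ε n)).add htail |>.inv₀ (by
    rw [add_zero]; exact abs_pos.mp (by rw [abs_mul_eps ha hε]; exact ha))
  rw [ContinuousAt, rCF_zero_s15 ha hε, ← one_div_mul_eq_div_of_abs_eq_one (hε n), one_div,
    ← add_zero (a * ε n)]
  refine hlim.congr' ?_
  filter_upwards [hsmall] with b hb
  rw [rCF_eq_one_div ha hε hb n, one_div]

lemma hasDerivAt_rCF_zero (ha : 0 < a) (hε : ∀ n, |ε n| = 1) (n : ℤ) :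
    HasDerivAt (fun b => rCF a b ε n) (-ε (n + 1) / a ^ 3) 0 := by
  set u := a * ε n
  set r : ℝ → ℝ := fun b => rCF a b ε (n + 1)
  have hu : |u| = a := abs_mul_eps ha hε n
  have hu0 : u ≠ 0 := abs_pos.mp (by rw [hu]; exact ha)
  have hslope : ∀ᶠ t in 𝓝[≠] 0,
      -r t / ((u + t * r t) * u) = t⁻¹ • (rCF a (0 + t) ε n - rCF a 0 ε n) := by
    filter_upwards [self_mem_nhdsWithin,
      nhdsWithin_le_nhds (eventually_abs_le_nhds_zero (show 0 < a ^ 2 / 8 by positivity))]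
      with t (ht : t ≠ 0) hb
    have hden : u + t * r t ≠ 0 := abs_pos.mp <| by
      linarith [half_le_abs_add_mul ha hu hb (abs_rCF_le ha hε hb (n + 1))]
    rw [zero_add, rCF_zero_s15 ha hε, rCF_eq_one_div ha hε hb n,
      ← one_div_mul_eq_div_of_abs_eq_one (hε n), smul_eq_mul, div_sub_div _ _ hden hu0]
    field_simp
    ring
  have hr : Tendsto r (𝓝 0) (𝓝 (ε (n + 1) / a)) := by
    simpa [r, rCF_zero_s15 ha hε] using (continuousAt_rCF_zero ha hε (n + 1)).tendsto
  have hden : Tendsto (fun t => (u + t * r t) * u) (𝓝 0)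
      (𝓝 ((u + 0 * (ε (n + 1) / a)) * u)) :=
    ((tendsto_const_nhds (x := u)).add ((tendsto_id (x := 𝓝 0)).mul hr)).mul_const u
  have hlim := (hr.neg.div hden (by simp [hu0])).mono_left (nhdsWithin_le_nhds (s := {0}ᶜ))
  have huu : u * u = a ^ 2 := by rw [← abs_mul_abs_self, hu, sq]
  rw [hasDerivAt_iff_tendsto_slope_zero]
  convert hlim.congr' hslope using 2
  rw [zero_mul, add_zero, huu]
  field_simp

end ContinuedFraction

lemma sum_mul_prod_erase_eq {R : Type*} [CommSemiring R] {f : ℕ → R} (hf : ∀ j, f j * f j = 1)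
    (n : ℕ) :
    ∑ i ∈ Finset.range (n + 1), f (i + 1) * ∏ j ∈ (Finset.range (n + 1)).erase i, f j =
      ∑ i ∈ Finset.range n, ∏ j ∈ Finset.range (n + 1) \ {i, i + 1}, f j +
        ∏ j ∈ Finset.range (n + 2) \ {n}, f j := by
  rw [Finset.sum_range_succ]
  congr 1
  · refine Finset.sum_congr rfl fun i hi => ?_
    have hsplit : (Finset.range (n + 1)).erase i =
        insert (i + 1) (Finset.range (n + 1) \ {i, i + 1}) := by
      ext j
      simp only [Finset.mem_erase, Finset.mem_range, Finset.mem_insert, Finset.mem_sdiff,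
        Finset.mem_singleton] at hi ⊢
      omega
    rw [hsplit, Finset.prod_insert (by simp), ← mul_assoc, hf, one_mul]
  · have hsplit :
        Finset.range (n + 2) \ {n} = insert (n + 1) ((Finset.range (n + 1)).erase n) := by
      ext j
      simp only [Finset.mem_erase, Finset.mem_range, Finset.mem_insert, Finset.mem_sdiff,
        Finset.mem_singleton]
      omega
    rw [hsplit, Finset.prod_insert (by simp)]

theorem deriv_T_n_at_zero :
    ∀ a : ℝ, 1 < a → ∀ ε : ℤ → ℝ, (∀ n : ℤ, ε n = 1 ∨ ε n = -1) →
      ∀ n : ℕ, 2 ≤ n →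
        HasDerivAt (fun b => ∏ j ∈ Finset.range (n + 1), rCF a b ε (j : ℤ))
          (-(1 / a ^ (n + 3)) *
            ((∑ i ∈ Finset.range n,
                ∏ j ∈ Finset.range (n + 1) \ {i, i + 1}, ε (j : ℤ)) +
              ∏ j ∈ Finset.range (n + 2) \ {n}, ε (j : ℤ))) 0 := by
  intro a ha ε hε n _
  have ha0 : 0 < a := one_pos.trans ha
  have hε' : ∀ n, |ε n| = 1 := fun n => by rcases hε n with h | h <;> simp [h]
  refine (HasDerivAt.fun_finsetProd (f := fun (j : ℕ) b => rCF a b ε j)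
    fun i _ => hasDerivAt_rCF_zero ha0 hε' i).congr_deriv ?_
  rw [← sum_mul_prod_erase_eq (f := fun j : ℕ => ε j)
    (fun j => by rw [← abs_mul_abs_self, hε', one_mul]), Finset.mul_sum]
  refine Finset.sum_congr rfl fun i hi => ?_
  simp only [rCF_zero_s15 ha0 hε', Finset.prod_div_distrib, Finset.prod_const,
    Finset.card_erase_of_mem hi, Finset.card_range, Nat.add_sub_cancel, smul_eq_mul, Nat.cast_add,
    Nat.cast_one]
  field_simp
  ring
end

section
/- Suppose 0 < b < 1 and 1 - b < a < 1 + b. Then the fixed points of the Lozi map L_{a,b} are exactly p₁ = (1/(1+a-b), 1/(1+a-b)) and p₂ = (1/(1-a-b), 1/(1-a-b)); setting N = (1+a-b)/((b-1)² + a²), the points n₁ = (N, (1-aN)/(1-b)) and n₂ = ((1-aN)/(1-b), N) satisfy L_{a,b}(n₁) = n₂ and L_{a,b}(n₂) = n₁; and every fixed point of the fourth iterate L_{a,b}⁴ is one of p₁, p₂, n₁, n₂. -/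
/-!
Write an orbit of `lozi a b` as `(xₙ₊₁, xₙ)`, so that `xₙ₊₁ = 1 - a|xₙ| + b xₙ₋₁`. On a cycle of
length four, subtracting the recurrence at `n` from the one at `n + 2` gives
`(1 + b)(xₙ₊₃ - xₙ₊₁) = -a(|xₙ₊₂| - |xₙ|)`, so each of the two differences `xₙ₊₂ - xₙ` is at most
`|a| / (1 + b) < 1` times the other in absolute value; both vanish and the point has period two.
A point `(x, y)` of period two solves `(1 - b)x + a|y| = 1`, `(1 - b)y + a|x| = 1`. When `x` and `y`
have the same sign this forces `x = y`, a fixed point; when the signs differ the system is linear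
with determinant `(1 - b)² + a²` and its solution is the two-cycle.
-/

/-- The Lozi map `L_{a,b}(x,y) = (1 - a|x| + by, x)`. -/
noncomputable def lozi (a b : ℝ) : ℝ × ℝ → ℝ × ℝ :=
  fun p => (1 - a * |p.1| + b * p.2, p.1)

theorem mul_add_mul_abs_eq_one_iff {c a x : ℝ} (hpos : 0 < c + a) (hneg : c - a < 0) :
    c * x + a * |x| = 1 ↔ x = 1 / (c + a) ∨ x = 1 / (c - a) := by
  constructor
  · intro h
    rcases abs_cases x with ⟨hx, -⟩ | ⟨hx, -⟩ <;> rw [hx] at h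
    · left
      rw [eq_div_iff hpos.ne']
      linarith
    · right
      rw [eq_div_iff hneg.ne]
      linarith
  · rintro (rfl | rfl)
    · rw [abs_of_pos (one_div_pos.2 hpos)]
      field_simp [hpos.ne']
    · rw [abs_of_neg (one_div_neg.2 hneg)]
      field_simp [hneg.ne]
      ring

section Lozi

variable {a b : ℝ}

theorem lozi_eq_self_iff {p : ℝ × ℝ} :
    lozi a b p = p ↔ p.2 = p.1 ∧ (1 - b) * p.1 + a * |p.1| = 1 := by
  obtain ⟨x, y⟩ := p
  simp only [lozi, Prod.mk.injEq]
  constructor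
  · rintro ⟨h, rfl⟩
    exact ⟨rfl, by linarith⟩
  · rintro ⟨rfl, h⟩
    exact ⟨by linarith, rfl⟩

theorem lozi_eq_self_iff_of_abs_lt (hab : |1 - b| < a) {p : ℝ × ℝ} :
    lozi a b p = p ↔
      p = (1 / (1 + a - b), 1 / (1 + a - b)) ∨ p = (1 / (1 - a - b), 1 / (1 - a - b)) := by
  obtain ⟨hpos, hneg⟩ := abs_sub_lt_iff.1 hab
  have hx := mul_add_mul_abs_eq_one_iff (x := p.1) (c := 1 - b) (a := a) (by linarith) (by linarith)
  rw [show 1 - b + a = 1 + a - b by ring, show 1 - b - a = 1 - a - b by ring] at hx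
  obtain ⟨x, y⟩ := p
  rw [lozi_eq_self_iff, hx]
  simp only [Prod.mk.injEq]
  constructor
  · rintro ⟨rfl, rfl | rfl⟩ <;> simp
  · rintro (⟨rfl, rfl⟩ | ⟨rfl, rfl⟩) <;> simp

theorem lozi_iterate_two_eq_self_iff {p : ℝ × ℝ} :
    (lozi a b)^[2] p = p ↔ (1 - b) * p.1 + a * |p.2| = 1 ∧ (1 - b) * p.2 + a * |p.1| = 1 := by
  obtain ⟨x, y⟩ := p
  simp only [Function.iterate_succ, Function.iterate_zero, Function.comp_apply, id, lozi,
    Prod.mk.injEq]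
  constructor
  · rintro ⟨hx, hy⟩
    rw [hy] at hx
    exact ⟨by linarith, by linarith⟩
  · rintro ⟨hx, hy⟩
    have hy' : 1 - a * |x| + b * y = y := by linarith
    rw [hy']
    exact ⟨by linarith, rfl⟩

theorem lozi_iterate_two_eq_self_of_iterate_four (hab : |a| < 1 + b) {p : ℝ × ℝ}
    (hp : (lozi a b)^[4] p = p) : (lozi a b)^[2] p = p := by
  obtain ⟨x₁, x₀⟩ := p
  set x₂ := 1 - a * |x₁| + b * x₀ with h₂
  set x₃ := 1 - a * |x₂| + b * x₁ with h₃
  have h : (1 - a * |1 - a * |x₃| + b * x₂| + b * x₃, 1 - a * |x₃| + b * x₂) = (x₁, x₀) := hp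
  obtain ⟨h₁, h₀⟩ := Prod.mk.inj h
  rw [h₀] at h₁
  have hb : 0 < 1 + b := (abs_nonneg a).trans_lt hab
  have bound : ∀ s t u v : ℝ, (1 + b) * (s - t) = a * (|u| - |v|) →
      (1 + b) * |s - t| ≤ |a| * |u - v| := fun s t u v h => by
    calc (1 + b) * |s - t| = |a| * |(|u| - |v|)| := by
          rw [← abs_of_pos hb, ← abs_mul, h, abs_mul]
      _ ≤ |a| * |u - v| :=
          mul_le_mul_of_nonneg_left (abs_abs_sub_abs_le_abs_sub u v) (abs_nonneg a)
  have hd₀ := bound x₂ x₀ x₃ x₁ (by linarith)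
  have hd₁ := bound x₃ x₁ x₀ x₂ (by linarith)
  rw [abs_sub_comm x₀] at hd₁
  have hsum : |x₂ - x₀| + |x₃ - x₁| ≤ 0 := by
    refine nonpos_of_mul_nonpos_right (a := 1 + b - |a|) ?_ (by linarith)
    linarith
  have hn₀ := abs_nonneg (x₂ - x₀)
  have hn₁ := abs_nonneg (x₃ - x₁)
  have e₀ : x₂ = x₀ := sub_eq_zero.1 (abs_eq_zero.1 (by linarith))
  have e₁ : x₃ = x₁ := sub_eq_zero.1 (abs_eq_zero.1 (by linarith))
  show (x₃, x₂) = (x₁, x₀)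
  rw [e₀, e₁]

noncomputable def loziCyclePos (a b : ℝ) : ℝ := (1 + a - b) / ((b - 1) ^ 2 + a ^ 2)

noncomputable def loziCycleNeg (a b : ℝ) : ℝ := (1 - a * loziCyclePos a b) / (1 - b)

theorem loziCycleNeg_eq (hb : b ≠ 1) : loziCycleNeg a b = (1 - a - b) / ((b - 1) ^ 2 + a ^ 2) := by
  have h₁ : 1 - b ≠ 0 := sub_ne_zero.2 hb.symm
  have h₂ : (b - 1) ^ 2 + a ^ 2 ≠ 0 := by positivity [sub_ne_zero.2 hb]
  unfold loziCycleNeg loziCyclePos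
  field_simp
  ring

theorem loziCyclePos_pos (hab : |1 - b| < a) : 0 < loziCyclePos a b := by
  have : 0 < a := (abs_nonneg _).trans_lt hab
  exact div_pos (by linarith [(abs_sub_lt_iff.1 hab).2]) (by positivity)

theorem loziCycleNeg_neg (hb : b ≠ 1) (hab : |1 - b| < a) : loziCycleNeg a b < 0 := by
  have : 0 < (b - 1) ^ 2 := by positivity [sub_ne_zero.2 hb]
  rw [loziCycleNeg_eq hb]
  exact div_neg_of_neg_of_pos (by linarith [(abs_sub_lt_iff.1 hab).1]) (by positivity)

theorem eq_loziCycle_iff (hb : b ≠ 1) {x y : ℝ} :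
    (1 - b) * x - a * y = 1 ∧ (1 - b) * y + a * x = 1 ↔
      x = loziCyclePos a b ∧ y = loziCycleNeg a b := by
  have hQ : (b - 1) ^ 2 + a ^ 2 ≠ 0 := by positivity [sub_ne_zero.2 hb]
  rw [loziCycleNeg_eq hb, loziCyclePos]
  constructor
  · rintro ⟨h₁, h₂⟩
    constructor <;> rw [eq_div_iff hQ]
    · linear_combination (1 - b) * h₁ + a * h₂
    · linear_combination (1 - b) * h₂ - a * h₁
  · rintro ⟨rfl, rfl⟩
    constructor <;> field_simp <;> ring

theorem lozi_loziCycle (hb : b ≠ 1) (hab : |1 - b| < a) :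
    lozi a b (loziCyclePos a b, loziCycleNeg a b) = (loziCycleNeg a b, loziCyclePos a b) := by
  obtain ⟨-, h⟩ := (eq_loziCycle_iff (a := a) hb).2 ⟨rfl, rfl⟩
  simp only [lozi, abs_of_pos (loziCyclePos_pos hab), Prod.mk.injEq, and_true]
  linarith

theorem lozi_loziCycle_swap (hb : b ≠ 1) (hab : |1 - b| < a) :
    lozi a b (loziCycleNeg a b, loziCyclePos a b) = (loziCyclePos a b, loziCycleNeg a b) := by
  obtain ⟨h, -⟩ := (eq_loziCycle_iff (a := a) hb).2 ⟨rfl, rfl⟩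
  simp only [lozi, abs_of_neg (loziCycleNeg_neg hb hab), Prod.mk.injEq, and_true]
  linarith

theorem lozi_eq_self_or_eq_loziCycle_of_iterate_two (hb : b ≠ 1) (hab : |1 - b| < a)
    {p : ℝ × ℝ} (hp : (lozi a b)^[2] p = p) :
    lozi a b p = p ∨ p = (loziCyclePos a b, loziCycleNeg a b) ∨
      p = (loziCycleNeg a b, loziCyclePos a b) := by
  obtain ⟨hpos, hneg⟩ := abs_sub_lt_iff.1 hab
  obtain ⟨x, y⟩ := p
  obtain ⟨hx, hy⟩ := lozi_iterate_two_eq_self_iff.1 hp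
  dsimp only at hx hy
  have fixed : y = x → lozi a b (x, y) = (x, y) := fun h =>
    lozi_eq_self_iff.2 ⟨h, by subst h; exact hx⟩
  rcases le_total 0 x with hx₀ | hx₀ <;> rcases le_total 0 y with hy₀ | hy₀
  · rw [abs_of_nonneg hy₀] at hx
    rw [abs_of_nonneg hx₀] at hy
    have h : (1 - b - a) * (y - x) = 0 := by linarith
    exact Or.inl (fixed (sub_eq_zero.1 ((mul_eq_zero.1 h).resolve_left (by linarith))))
  · rw [abs_of_nonpos hy₀] at hx
    rw [abs_of_nonneg hx₀] at hy
    obtain ⟨rfl, rfl⟩ := (eq_loziCycle_iff (a := a) (x := x) (y := y) hb).1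
      ⟨by linarith, by linarith⟩
    exact Or.inr (Or.inl rfl)
  · rw [abs_of_nonneg hy₀] at hx
    rw [abs_of_nonpos hx₀] at hy
    obtain ⟨rfl, rfl⟩ := (eq_loziCycle_iff (a := a) (x := y) (y := x) hb).1
      ⟨by linarith, by linarith⟩
    exact Or.inr (Or.inr rfl)
  · rw [abs_of_nonpos hy₀] at hx
    rw [abs_of_nonpos hx₀] at hy
    have h : (1 - b + a) * (y - x) = 0 := by linarith
    exact Or.inl (fixed (sub_eq_zero.1 ((mul_eq_zero.1 h).resolve_left (by linarith))))

end Lozi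

theorem lozi_periodic_points_structure :
    ∀ a b : ℝ, 0 < b → b < 1 → 1 - b < a → a < 1 + b →
      (∀ p : ℝ × ℝ, lozi a b p = p ↔
        p = (1 / (1 + a - b), 1 / (1 + a - b)) ∨
        p = (1 / (1 - a - b), 1 / (1 - a - b))) ∧
      lozi a b ((1 + a - b) / ((b - 1) ^ 2 + a ^ 2),
          (1 - a * ((1 + a - b) / ((b - 1) ^ 2 + a ^ 2))) / (1 - b)) =
        ((1 - a * ((1 + a - b) / ((b - 1) ^ 2 + a ^ 2))) / (1 - b),
          (1 + a - b) / ((b - 1) ^ 2 + a ^ 2)) ∧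
      lozi a b ((1 - a * ((1 + a - b) / ((b - 1) ^ 2 + a ^ 2))) / (1 - b),
          (1 + a - b) / ((b - 1) ^ 2 + a ^ 2)) =
        ((1 + a - b) / ((b - 1) ^ 2 + a ^ 2),
          (1 - a * ((1 + a - b) / ((b - 1) ^ 2 + a ^ 2))) / (1 - b)) ∧
      (∀ p : ℝ × ℝ, (lozi a b)^[4] p = p →
        p = (1 / (1 + a - b), 1 / (1 + a - b)) ∨
        p = (1 / (1 - a - b), 1 / (1 - a - b)) ∨
        p = ((1 + a - b) / ((b - 1) ^ 2 + a ^ 2),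
          (1 - a * ((1 + a - b) / ((b - 1) ^ 2 + a ^ 2))) / (1 - b)) ∨
        p = ((1 - a * ((1 + a - b) / ((b - 1) ^ 2 + a ^ 2))) / (1 - b),
          (1 + a - b) / ((b - 1) ^ 2 + a ^ 2))) := by
  intro a b _ hb₁ hab₁ hab₂
  have hb : b ≠ 1 := hb₁.ne
  have hab : |1 - b| < a := abs_sub_lt_iff.2 ⟨by linarith, by linarith⟩
  refine ⟨fun p => lozi_eq_self_iff_of_abs_lt hab, lozi_loziCycle hb hab,
    lozi_loziCycle_swap hb hab, fun p hp => ?_⟩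
  have h₂ := lozi_iterate_two_eq_self_of_iterate_four (abs_lt.2 ⟨by linarith, hab₂⟩) hp
  rcases lozi_eq_self_or_eq_loziCycle_of_iterate_two hb hab h₂ with hfix | hcyc | hcyc
  · rcases (lozi_eq_self_iff_of_abs_lt hab).1 hfix with h | h
    exacts [Or.inl h, Or.inr (Or.inl h)]
  · exact Or.inr (Or.inr (Or.inl hcyc))
  · exact Or.inr (Or.inr (Or.inr hcyc))
end

section
/- Let a = 1 and b = 1/2, and let Z = (1 + √3/3, 0) ∈ ℝ² (the intersection of the half-line {p₁ + t·((1+√3)/2, -1) : t > 0} emanating from the fixed point p₁ = (2/3, 2/3) in its unstable direction with the x-axis). Then the iterates L_{1,1/2}^{4m}(Z) converge to the period-two point n₁ = (6/5, -2/5) as m → ∞. -/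
lemma lozi_step (t : ℝ) (ht : |t| ≤ 1) :
    (lozi 1 (1 / 2))^[4] ((6/5 + t * (Real.sqrt 3 / 3 - 1/5), -2/5 + t * (2/5)) : ℝ × ℝ)
      = (6/5 + (-t/4) * (Real.sqrt 3 / 3 - 1/5), -2/5 + (-t/4) * (2/5)) := by
  obtain ⟨ht1, ht2⟩ := abs_le.mp ht
  set s := Real.sqrt 3 with hs_def
  have hs : s ^ 2 = 3 := Real.sq_sqrt (by norm_num)
  have hs0 : (0:ℝ) ≤ s := Real.sqrt_nonneg 3
  have hsl : (1.7:ℝ) < s := by nlinarith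
  have hsu : s < (1.8:ℝ) := by nlinarith
  have h1 : lozi 1 (1/2) ((6/5 + t * (s / 3 - 1/5), -2/5 + t * (2/5)) : ℝ × ℝ)
      = (-2/5 + t * (2/5 - s/3), 6/5 + t * (s / 3 - 1/5)) := by
    simp only [lozi]
    rw [abs_of_pos (by nlinarith)]
    norm_num; ring
  have h2 : lozi 1 (1/2) ((-2/5 + t * (2/5 - s/3), 6/5 + t * (s / 3 - 1/5)) : ℝ × ℝ)
      = (6/5 + t * (3/10 - s/6), -2/5 + t * (2/5 - s/3)) := by
    simp only [lozi]
    rw [abs_of_neg (by nlinarith)]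
    norm_num; ring
  have h3 : lozi 1 (1/2) ((6/5 + t * (3/10 - s/6), -2/5 + t * (2/5 - s/3)) : ℝ × ℝ)
      = (-2/5 - t/10, 6/5 + t * (3/10 - s/6)) := by
    simp only [lozi]
    rw [abs_of_pos (by nlinarith)]
    norm_num; ring
  have h4 : lozi 1 (1/2) ((-2/5 - t/10, 6/5 + t * (3/10 - s/6)) : ℝ × ℝ)
      = (6/5 + (-t/4) * (s / 3 - 1/5), -2/5 + (-t/4) * (2/5)) := by
    simp only [lozi]
    rw [abs_of_neg (by nlinarith)]
    refine Prod.ext ?_ ?_ <;> norm_num <;> ring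
  show (lozi 1 (1/2)) ((lozi 1 (1/2)) ((lozi 1 (1/2)) ((lozi 1 (1/2))
    ((6/5 + t * (s / 3 - 1/5), -2/5 + t * (2/5)) : ℝ × ℝ)))) = _
  rw [h1, h2, h3, h4]

lemma lozi_closed_form (m : ℕ) :
    (lozi 1 (1 / 2))^[4 * m] ((1 + Real.sqrt 3 / 3, 0) : ℝ × ℝ)
      = (6/5 + (-1/4:ℝ)^m * (Real.sqrt 3 / 3 - 1/5), -2/5 + (-1/4:ℝ)^m * (2/5)) := by
  induction m with
  | zero => refine Prod.ext ?_ ?_ <;> norm_num <;> ring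
  | succ n ih =>
      have h4 : 4 * (n + 1) = 4 + 4 * n := by ring
      rw [h4, Function.iterate_add_apply, ih]
      have ht : |(-1/4:ℝ)^n| ≤ 1 := by
        rw [abs_pow]
        exact pow_le_one₀ (abs_nonneg _) (by rw [abs_of_nonpos] <;> norm_num)
      rw [lozi_step _ ht]
      congr 1 <;> ring

theorem lozi_iterates_of_Z_tendsto_n₁ :
    Filter.Tendsto (fun m : ℕ => (lozi 1 (1 / 2))^[4 * m] ((1 + Real.sqrt 3 / 3, 0) : ℝ × ℝ))
      Filter.atTop (nhds ((6 / 5 : ℝ), (-2 / 5 : ℝ))) := by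
  simp only [lozi_closed_form]
  have hp : Filter.Tendsto (fun m : ℕ => ((-1/4:ℝ))^m) Filter.atTop (nhds 0) := by
    apply tendsto_pow_atTop_nhds_zero_of_abs_lt_one
    rw [abs_of_nonpos] <;> norm_num
  have h1 : Filter.Tendsto (fun m : ℕ => (6/5 + (-1/4:ℝ)^m * (Real.sqrt 3 / 3 - 1/5)))
      Filter.atTop (nhds (6/5)) := by
    have := (hp.mul_const (Real.sqrt 3 / 3 - 1/5)).const_add (6/5 : ℝ)
    simpa using this
  have h2 : Filter.Tendsto (fun m : ℕ => (-2/5 + (-1/4:ℝ)^m * (2/5)))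
      Filter.atTop (nhds (-2/5)) := by
    have := (hp.mul_const (2/5 : ℝ)).const_add (-2/5 : ℝ)
    simpa using this
  have := h1.prodMk_nhds h2
  convert this using 2 <;> norm_num
end
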